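/- Let (c_k)_{k≥1} be a sequence of real numbers with c_1 > 0 and c_{k+1} an integer with c_{k+1} ≥ 2 for all k ≥ 1. Suppose (p_k)_{k≥1} is a sequence of prime numbers such that (a) p_k^{c_{k+1}} ≤ p_{k+1} < (p_k + 1)^{c_{k+1}} − 1 for all k ≥ 1, and (b) there exists k_0 ≥ 1 such that for all k ≥ k_0, p_{k+1} is the least prime number in the interval [p_k^{c_{k+1}}, (p_k + 1)^{c_{k+1}} − 1). Then A = lim_{k→∞} p_k^{1/C_k} exists and A ∈ ∂_L W(c_k). Moreover, if p_1 = 2 and k_0 = 1 can be taken in (b), then A is the minimum of W(c_k). -/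

import Mathlib

/-!
Write `a k = p k ^ (1 / C k)` and `b k = (p k + 1) ^ (1 / C k)`. Raising to the power
`C (k + 1)`, condition (a) says exactly that `a k < a (k + 1)` and `b (k + 1) < b k`, so `a k`
increases to a limit `A` with `a k ≤ A < b k`, i.e. `⌊A ^ C k⌋ = p k` for all `k`, and `A ∈ W`.

Conversely let `B ∈ W` with `⌊B ^ C K⌋ ≥ p K` for some `K ≥ k₀`. Then `⌊B ^ C (k + 1)⌋` is a
prime `≥ ⌊B ^ C k⌋ ^ c (k + 1)`, so inductively it either lies in the window
`[p k ^ c (k + 1), …)` of (b), where `p (k + 1)` is the least prime, or beyond it; either way it is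
`≥ p (k + 1)`. Thus `a k ≤ B` for all `k ≥ K`, and `A ≤ B`. For `K = k₀` this shows that
`[a k₀, A)` misses `W`, so `A` is the supremum of a component of the complement; if `p 1 = 2` and
`k₀ = 1`, every `B ∈ W` qualifies, so `A = min W`.
-/

/-- `Cprod c k = c 1 * c 2 * ⋯ * c k`. -/
noncomputable def Cprod (c : ℕ → ℝ) (k : ℕ) : ℝ := ∏ i ∈ Finset.Icc 1 k, c i

/-- The set `W(c_k)` of `A > 1` such that `⌊A ^ (c 1 ⋯ c k)⌋` is prime for every `k ≥ 1`. -/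
noncomputable def Wset (c : ℕ → ℝ) : Set ℝ :=
  {A : ℝ | 1 < A ∧ ∀ k : ℕ, 1 ≤ k → Prime ⌊A ^ Cprod c k⌋}

/-- `U` is a connected component of `S` (as a subset of `ℝ`). -/
def IsCCompOf (U S : Set ℝ) : Prop := ∃ x ∈ S, U = connectedComponentIn S x

/-- The left sub-boundary of `X ⊆ ℝ`. -/
def subL (X : Set ℝ) : Set ℝ :=
  {A : ℝ | ∃ U : Set ℝ, IsCCompOf U Xᶜ ∧ BddAbove U ∧ A = sSup U}

open Filter Topology Set

theorem natCast_floor_eq_self {x : ℝ} (hx : 0 ≤ x) (hint : ∃ m : ℤ, x = m) :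
    (⌊x⌋₊ : ℝ) = x := by
  obtain ⟨m, rfl⟩ := hint
  lift m to ℕ using (by exact_mod_cast hx)
  simp

theorem pow_floor_le_floor_pow {x : ℝ} (hx : 0 ≤ x) (m : ℕ) : ⌊x⌋₊ ^ m ≤ ⌊x ^ m⌋₊ :=
  Nat.le_floor (by push_cast; exact pow_le_pow_left₀ (Nat.cast_nonneg _) (Nat.floor_le hx) m)

theorem mem_subL_of_Ico_subset_compl {X : Set ℝ} {a A : ℝ} (hA : A ∈ X) (haA : a < A)
    (hI : Ico a A ⊆ Xᶜ) : A ∈ subL X := by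
  set U := connectedComponentIn Xᶜ a
  have ha : a ∈ Xᶜ := hI ⟨le_rfl, haA⟩
  have hIU : Ico a A ⊆ U :=
    isPreconnected_Ico.subset_connectedComponentIn ⟨le_rfl, haA⟩ hI
  have hUA : ∀ y ∈ U, y < A := by
    intro y hy
    by_contra! hAy
    have hAU : A ∈ U :=
      isPreconnected_connectedComponentIn.ordConnected.out (mem_connectedComponentIn ha) hy
        ⟨haA.le, hAy⟩
    exact connectedComponentIn_subset _ _ hAU hA
  have hlub : IsLUB U A :=
    ⟨fun y hy => (hUA y hy).le, fun z hz => (isLUB_Ico haA).2 fun y hy => hz (hIU hy)⟩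
  exact ⟨U, ⟨a, ha, rfl⟩, ⟨A, hlub.1⟩, (hlub.csSup_eq ⟨a, mem_connectedComponentIn ha⟩).symm⟩

section Cprod

variable {c : ℕ → ℝ}

theorem Cprod_succ (c : ℕ → ℝ) (k : ℕ) : Cprod c (k + 1) = Cprod c k * c (k + 1) :=
  Finset.prod_Icc_succ_top (by omega) c

theorem Cprod_pos (hc : ∀ k, 1 ≤ k → 0 < c k) (k : ℕ) : 0 < Cprod c k :=
  Finset.prod_pos fun i hi => hc i (Finset.mem_Icc.1 hi).1

theorem rpow_Cprod_succ {x : ℝ} (hx : 0 ≤ x) {k m : ℕ} (hm : c (k + 1) = m) :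
    x ^ Cprod c (k + 1) = (x ^ Cprod c k) ^ m := by
  rw [Cprod_succ, hm, Real.rpow_mul hx, Real.rpow_natCast]

theorem mem_Wset_iff {B : ℝ} :
    B ∈ Wset c ↔ 1 < B ∧ ∀ k, 1 ≤ k → (⌊B ^ Cprod c k⌋₊).Prime := by
  refine and_congr_right fun hB => forall₂_congr fun k _ => ?_
  rw [Nat.prime_iff_prime_int, Int.natCast_floor_eq_floor (Real.rpow_nonneg (by linarith) _)]

end Cprod

noncomputable def Croot (c : ℕ → ℝ) (k : ℕ) (x : ℝ) : ℝ := x ^ (1 / Cprod c k)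

section Croot

variable {c : ℕ → ℝ} {k m : ℕ} {x y : ℝ}

theorem Croot_nonneg (hx : 0 ≤ x) : 0 ≤ Croot c k x := Real.rpow_nonneg hx _

theorem Croot_rpow_Cprod (hC : 0 < Cprod c k) (hx : 0 ≤ x) : Croot c k x ^ Cprod c k = x := by
  rw [Croot, one_div, Real.rpow_inv_rpow hx hC.ne']

theorem Croot_le_Croot (hC : 0 < Cprod c k) (hx : 0 ≤ x) (hxy : x ≤ y) :
    Croot c k x ≤ Croot c k y :=
  Real.rpow_le_rpow hx hxy (one_div_pos.2 hC).le

theorem Croot_le_iff (hC : 0 < Cprod c k) (hx : 0 ≤ x) (hy : 0 ≤ y) :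
    Croot c k x ≤ y ↔ x ≤ y ^ Cprod c k := by
  rw [Croot, one_div]
  exact Real.rpow_inv_le_iff_of_pos hx hy hC

theorem lt_Croot_iff (hC : 0 < Cprod c k) (hx : 0 ≤ x) (hy : 0 ≤ y) :
    y < Croot c k x ↔ y ^ Cprod c k < x :=
  lt_iff_lt_of_le_iff_le (Croot_le_iff hC hx hy)

theorem Croot_natCast_le_iff_le_floor (hC : 0 < Cprod c k) (hy : 0 ≤ y) (q : ℕ) :
    Croot c k q ≤ y ↔ q ≤ ⌊y ^ Cprod c k⌋₊ := by
  rw [Croot_le_iff hC q.cast_nonneg hy, Nat.le_floor_iff (Real.rpow_nonneg hy _)]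

theorem Croot_rpow_Cprod_succ (hC : 0 < Cprod c k) (hx : 0 ≤ x) (hm : c (k + 1) = m) :
    Croot c k x ^ Cprod c (k + 1) = x ^ m := by
  rw [rpow_Cprod_succ (Croot_nonneg hx) hm, Croot_rpow_Cprod hC hx]

theorem Croot_lt_Croot_succ_iff (hC : ∀ k, 0 < Cprod c k) (hx : 0 ≤ x) (hy : 0 ≤ y)
    (hm : c (k + 1) = m) : Croot c k x < Croot c (k + 1) y ↔ x ^ m < y := by
  rw [← Real.rpow_lt_rpow_iff (Croot_nonneg hx) (Croot_nonneg hy) (hC (k + 1)),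
    Croot_rpow_Cprod_succ (hC k) hx hm, Croot_rpow_Cprod (hC (k + 1)) hy]

theorem Croot_succ_lt_Croot_iff (hC : ∀ k, 0 < Cprod c k) (hx : 0 ≤ x) (hy : 0 ≤ y)
    (hm : c (k + 1) = m) : Croot c (k + 1) y < Croot c k x ↔ y < x ^ m := by
  rw [← Real.rpow_lt_rpow_iff (Croot_nonneg hy) (Croot_nonneg hx) (hC (k + 1)),
    Croot_rpow_Cprod_succ (hC k) hx hm, Croot_rpow_Cprod (hC (k + 1)) hy]

end Croot

/-- `q ∈ [x ^ m, (x + 1) ^ m - 1)`, the interval of conditions (a) and (b), stated without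
natural-number subtraction. -/
def InWindow (m x q : ℕ) : Prop := x ^ m ≤ q ∧ q + 1 < (x + 1) ^ m

theorem inWindow_iff_real {m x q : ℕ} {e : ℝ} (he : e = m) :
    InWindow m x q ↔ (x : ℝ) ^ e ≤ q ∧ (q : ℝ) < ((x : ℝ) + 1) ^ e - 1 := by
  subst he
  rw [InWindow, Real.rpow_natCast, Real.rpow_natCast, lt_sub_iff_add_lt]
  norm_cast

/-- Condition (a), with the integer exponents `c (k + 1)` recorded as natural numbers `n k`. -/
structure IsWindowChain (c : ℕ → ℝ) (n p : ℕ → ℕ) : Prop where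
  Cprod_pos : ∀ k, 0 < Cprod c k
  exponent_eq : ∀ k, 1 ≤ k → c (k + 1) = n k
  two_le_exponent : ∀ k, 1 ≤ k → 2 ≤ n k
  prime : ∀ k, 1 ≤ k → (p k).Prime
  inWindow : ∀ k, 1 ≤ k → InWindow (n k) (p k) (p (k + 1))

namespace IsWindowChain

variable {c : ℕ → ℝ} {n p : ℕ → ℕ} {k : ℕ} {A : ℝ}

theorem Croot_lt_succ (h : IsWindowChain c n p) (hk : 1 ≤ k) :
    Croot c k (p k) < Croot c (k + 1) (p (k + 1)) := by
  refine (Croot_lt_Croot_succ_iff h.Cprod_pos (Nat.cast_nonneg _) (Nat.cast_nonneg _)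
    (h.exponent_eq k hk)).2 ?_
  have hne : p k ^ n k ≠ p (k + 1) := fun heq =>
    Nat.Prime.not_prime_pow (h.two_le_exponent k hk) (heq ▸ h.prime (k + 1) (by omega))
  exact_mod_cast (h.inWindow k hk).1.lt_of_ne hne

theorem Croot_succ_add_one_lt (h : IsWindowChain c n p) (hk : 1 ≤ k) :
    Croot c (k + 1) (p (k + 1) + 1) < Croot c k (p k + 1) :=
  (Croot_succ_lt_Croot_iff h.Cprod_pos (by positivity) (by positivity) (h.exponent_eq k hk)).2
    (by exact_mod_cast (h.inWindow k hk).2)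

theorem monotoneOn (h : IsWindowChain c n p) : MonotoneOn (fun k => Croot c k (p k)) (Ici 1) :=
  monotoneOn_nat_Ici_of_le_succ fun _ hk => (h.Croot_lt_succ hk).le

theorem antitoneOn (h : IsWindowChain c n p) :
    AntitoneOn (fun k => Croot c k (p k + 1)) (Ici 1) :=
  antitoneOn_nat_Ici_of_succ_le fun _ hk => (h.Croot_succ_add_one_lt hk).le

theorem Croot_le_Croot_add_one (h : IsWindowChain c n p) {j : ℕ} (hk : 1 ≤ k) (hj : 1 ≤ j) :
    Croot c k (p k) ≤ Croot c j (p j + 1) := by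
  have hkj : 1 ≤ max k j := hk.trans (le_max_left k j)
  calc Croot c k (p k) ≤ Croot c (max k j) (p (max k j)) := h.monotoneOn hk hkj (le_max_left k j)
    _ ≤ Croot c (max k j) (p (max k j) + 1) :=
      Croot_le_Croot (h.Cprod_pos _) (Nat.cast_nonneg _) (by linarith)
    _ ≤ Croot c j (p j + 1) := h.antitoneOn hj hkj (le_max_right k j)

theorem exists_tendsto (h : IsWindowChain c n p) :
    ∃ A, Tendsto (fun k => Croot c k (p k)) atTop (𝓝 A) := by
  refine ⟨_, Real.tendsto_atTop_csSup_of_monotoneOn_bddAbove_nat_Ici h.monotoneOn ?_⟩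
  exact ⟨Croot c 1 (p 1 + 1), fun _ ⟨k, hk, hx⟩ => hx ▸ h.Croot_le_Croot_add_one hk le_rfl⟩

theorem Croot_le_of_tendsto (h : IsWindowChain c n p)
    (hA : Tendsto (fun k => Croot c k (p k)) atTop (𝓝 A)) (hk : 1 ≤ k) : Croot c k (p k) ≤ A :=
  ge_of_tendsto hA (eventually_atTop.2 ⟨k, fun _ hj => h.monotoneOn hk (hk.trans hj) hj⟩)

theorem lt_Croot_add_one_of_tendsto (h : IsWindowChain c n p)
    (hA : Tendsto (fun k => Croot c k (p k)) atTop (𝓝 A)) (hk : 1 ≤ k) :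
    A < Croot c k (p k + 1) := by
  refine lt_of_le_of_lt ?_ (h.Croot_succ_add_one_lt hk)
  exact le_of_tendsto hA (eventually_atTop.2
    ⟨k + 1, fun _ hj => h.Croot_le_Croot_add_one (by omega) (by omega)⟩)

theorem floor_rpow_Cprod_of_tendsto (h : IsWindowChain c n p)
    (hA : Tendsto (fun k => Croot c k (p k)) atTop (𝓝 A)) (hk : 1 ≤ k) :
    ⌊A ^ Cprod c k⌋₊ = p k := by
  have hA0 : 0 ≤ A := (Croot_nonneg (Nat.cast_nonneg _)).trans (h.Croot_le_of_tendsto hA hk)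
  rw [Nat.floor_eq_iff (Real.rpow_nonneg hA0 _),
    ← Croot_le_iff (h.Cprod_pos k) (Nat.cast_nonneg _) hA0,
    ← lt_Croot_iff (h.Cprod_pos k) (by positivity) hA0]
  exact ⟨h.Croot_le_of_tendsto hA hk, h.lt_Croot_add_one_of_tendsto hA hk⟩

theorem mem_Wset_of_tendsto (h : IsWindowChain c n p)
    (hA : Tendsto (fun k => Croot c k (p k)) atTop (𝓝 A)) : A ∈ Wset c := by
  have h1 : 1 < Croot c 1 (p 1) :=
    Real.one_lt_rpow (by exact_mod_cast (h.prime 1 le_rfl).one_lt) (one_div_pos.2 (h.Cprod_pos 1))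
  refine mem_Wset_iff.2 ⟨h1.trans_le (h.Croot_le_of_tendsto hA le_rfl), fun k hk => ?_⟩
  rw [h.floor_rpow_Cprod_of_tendsto hA hk]
  exact h.prime k hk

theorem le_floor_rpow_Cprod_of_minimal (h : IsWindowChain c n p) {K : ℕ} (hK : 1 ≤ K)
    (hmin : ∀ k, K ≤ k → ∀ q : ℕ, q.Prime → InWindow (n k) (p k) q → p (k + 1) ≤ q)
    {B : ℝ} (hB : B ∈ Wset c) (hBK : p K ≤ ⌊B ^ Cprod c K⌋₊) :
    ∀ k, K ≤ k → p k ≤ ⌊B ^ Cprod c k⌋₊ := by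
  obtain ⟨hB1, hBprime⟩ := mem_Wset_iff.1 hB
  intro k hKk
  induction k, hKk using Nat.le_induction with
  | base => exact hBK
  | succ k hKk ih =>
    have hk : 1 ≤ k := hK.trans hKk
    have hlow : p k ^ n k ≤ ⌊B ^ Cprod c (k + 1)⌋₊ := by
      rw [rpow_Cprod_succ (by linarith) (h.exponent_eq k hk)]
      exact (Nat.pow_le_pow_left ih _).trans (pow_floor_le_floor_pow (by positivity) _)
    by_cases hhigh : ⌊B ^ Cprod c (k + 1)⌋₊ + 1 < (p k + 1) ^ n k
    · exact hmin k hKk _ (hBprime (k + 1) (by omega)) ⟨hlow, hhigh⟩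
    · have := (h.inWindow k hk).2
      omega

theorem le_of_tendsto_of_minimal (h : IsWindowChain c n p)
    (hA : Tendsto (fun k => Croot c k (p k)) atTop (𝓝 A)) {K : ℕ} (hK : 1 ≤ K)
    (hmin : ∀ k, K ≤ k → ∀ q : ℕ, q.Prime → InWindow (n k) (p k) q → p (k + 1) ≤ q)
    {B : ℝ} (hB : B ∈ Wset c) (hBK : p K ≤ ⌊B ^ Cprod c K⌋₊) : A ≤ B := by
  have hB0 : 0 ≤ B := by linarith [hB.1]
  refine le_of_tendsto hA (eventually_atTop.2 ⟨K, fun k hk => ?_⟩)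
  exact (Croot_natCast_le_iff_le_floor (h.Cprod_pos k) hB0 _).2
    (h.le_floor_rpow_Cprod_of_minimal hK hmin hB hBK k hk)

end IsWindowChain

theorem limit_mem_subL_and_min (c : ℕ → ℝ) (h1 : 0 < c 1)
    (h2 : ∀ k : ℕ, 1 ≤ k → (∃ m : ℤ, c (k + 1) = (m : ℝ)) ∧ 2 ≤ c (k + 1))
    (p : ℕ → ℕ) (hp : ∀ k : ℕ, 1 ≤ k → (p k).Prime)
    (ha : ∀ k : ℕ, 1 ≤ k →
      (p k : ℝ) ^ c (k + 1) ≤ (p (k + 1) : ℝ) ∧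
      (p (k + 1) : ℝ) < ((p k : ℝ) + 1) ^ c (k + 1) - 1)
    (k0 : ℕ) (hk0 : 1 ≤ k0)
    (hb : ∀ k : ℕ, k0 ≤ k → ∀ q : ℕ, q.Prime →
      (p k : ℝ) ^ c (k + 1) ≤ (q : ℝ) → (q : ℝ) < ((p k : ℝ) + 1) ^ c (k + 1) - 1 →
      p (k + 1) ≤ q) :
    ∃ A : ℝ,
      Filter.Tendsto (fun k : ℕ => (p k : ℝ) ^ (1 / Cprod c k)) Filter.atTop (nhds A) ∧
      A ∈ subL (Wset c) ∧
      ((p 1 = 2 ∧ ∀ k : ℕ, 1 ≤ k → ∀ q : ℕ, q.Prime →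
          (p k : ℝ) ^ c (k + 1) ≤ (q : ℝ) → (q : ℝ) < ((p k : ℝ) + 1) ^ c (k + 1) - 1 →
          p (k + 1) ≤ q) →
        IsLeast (Wset c) A) := by
  have hcn : ∀ k, 1 ≤ k → c (k + 1) = ⌊c (k + 1)⌋₊ := fun k hk =>
    (natCast_floor_eq_self (by linarith [(h2 k hk).2]) (h2 k hk).1).symm
  have hc : ∀ k, 1 ≤ k → 0 < c k := fun k hk => by
    obtain ⟨j, rfl⟩ : ∃ j, k = j + 1 := ⟨k - 1, by omega⟩
    rcases j.eq_zero_or_pos with rfl | hj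
    exacts [h1, by linarith [(h2 j hj).2]]
  have hchain : IsWindowChain c (fun k => ⌊c (k + 1)⌋₊) p :=
    ⟨Cprod_pos hc, hcn, fun k hk => Nat.le_floor (by exact_mod_cast (h2 k hk).2), hp,
      fun k hk => (inWindow_iff_real (hcn k hk)).2 (ha k hk)⟩
  have hmin : ∀ K, 1 ≤ K → (∀ k, K ≤ k → ∀ q : ℕ, q.Prime → (p k : ℝ) ^ c (k + 1) ≤ q →
      (q : ℝ) < ((p k : ℝ) + 1) ^ c (k + 1) - 1 → p (k + 1) ≤ q) →
      ∀ k, K ≤ k → ∀ q : ℕ, q.Prime → InWindow ⌊c (k + 1)⌋₊ (p k) q → p (k + 1) ≤ q :=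
    fun K hK hb k hk q hq hw =>
      ((inWindow_iff_real (hcn k (hK.trans hk))).1 hw).elim (hb k hk q hq)
  obtain ⟨A, hA⟩ := hchain.exists_tendsto
  have hAW := hchain.mem_Wset_of_tendsto hA
  have hk0A := (hchain.Croot_lt_succ hk0).trans_le (hchain.Croot_le_of_tendsto hA (by omega))
  refine ⟨A, hA, mem_subL_of_Ico_subset_compl hAW hk0A fun B hB hBW => ?_, ?_⟩
  · have hBk0 :=
      (Croot_natCast_le_iff_le_floor (hchain.Cprod_pos k0) (by linarith [hBW.1]) _).1 hB.1
    exact hB.2.not_ge (hchain.le_of_tendsto_of_minimal hA hk0 (hmin k0 hk0 hb) hBW hBk0)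
  · rintro ⟨hp1, hb1⟩
    refine ⟨hAW, fun B hB => hchain.le_of_tendsto_of_minimal hA le_rfl (hmin 1 le_rfl hb1) hB ?_⟩
    exact hp1 ▸ ((mem_Wset_iff.1 hB).2 1 le_rfl).two_le
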